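/- Consider a two-user MAC with finite input alphabets 𝒳₁, 𝒳₂, finite output alphabet 𝒴, and channel W with W(y|x₁,x₂) > 0 for all x₁,x₂,y. Let P be a full-support pmf on 𝒰₁×𝒰₂ with marginals P_{U₁}, P_{U₂}, and assume max_u P_{U_ν}(u) < 1 for ν = 1,2. For ν = 1,2 let Q_ν^{(1)}, Q_ν^{(2)} be full-support pmfs on 𝒳_ν. For i₁,i₂ ∈ {1,2} and ρ ∈ [0,1] define the Gallager channel functions E₀^{{1}}(ρ;i₁,i₂) = −log ∑_{x₂,y} ( ∑_{x₁} Q₁^{(i₁)}(x₁) ( Q₂^{(i₂)}(x₂) W(y|x₁,x₂) )^{1/(1+ρ)} )^{1+ρ}, E₀^{{2}}(ρ;i₁,i₂) defined symmetrically with the roles of the users exchanged, and E₀^{{1,2}}(ρ;i₁,i₂) = −log ∑_{y} ( ∑_{x₁,x₂} Q₁^{(i₁)}(x₁) Q₂^{(i₂)}(x₂) W(y|x₁,x₂)^{1/(1+ρ)} )^{1+ρ}; and the generalized Gallager source functions E_{s,{1}}(ρ,P) = log ∑_{u₂} (∑_{u₁} P(u₁,u₂)^{1/(1+ρ)})^{1+ρ},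 E_{s,{2}} symmetrically, and E_{s,{1,2}}(ρ,P) = (1+ρ) log ∑_{u₁,u₂} P(u₁,u₂)^{1/(1+ρ)}. For γ₁,γ₂ ∈ (0,1), let G^{τ,i₁,i₂}(ρ,γ₁,γ₂) = inf { D(P̂‖P) − ρ·H_τ(P̂) : P̂ a pmf on 𝒰₁×𝒰₂ with P̂ ∈ B_1^{i₁}(γ₁) ∩ B_2^{i₂}(γ₂) } ∈ ℝ ∪ {+∞} (inf over the empty set = +∞), and f_{i₁,i₂}(γ₁,γ₂) = min over τ ∈ {{1},{2},{1,2}} of sup_{ρ∈[0,1]} ( E₀^{τ}(ρ;i₁,i₂) + G^{τ,i₁,i₂}(ρ,γ₁,γ₂) ). Then the message-dependent exponent E(P,W) = sup_{γ₁,γ₂ ∈ (0,1)} min_{i₁,i₂ ∈ {1,2}} f_{i₁,i₂}(γ₁,γ₂) satisfies E(P,W) ≥ max_{i₁,i₂ ∈ {1,2}} min over τ ∈ {{1},{2},{1,2}} of sup_{ρ∈[0,1]} ( E₀^{τ}(ρ;i₁,i₂) − E_{s,τ}(ρ,P) ); i.e., the exponent with two input distributions per user is at least the best i.i.d. random-coding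 exponent obtained with a single pair of input distributions. -/

import Mathlib

open Real BigOperators

/-- A probability mass function on a finite alphabet. -/
def IsPmf {α : Type*} [Fintype α] (p : α → ℝ) : Prop :=
  (∀ a, 0 ≤ p a) ∧ ∑ a, p a = 1

/-- Relative entropy `D(p‖q) = ∑ p log (p/q)` (natural log, `0 log 0 = 0`). -/
noncomputable def klDiv {α : Type*} [Fintype α] (p q : α → ℝ) : ℝ :=
  ∑ a, p a * Real.log (p a / q a)

/-- Shannon entropy `H(p) = −∑ p log p` (natural log, `0 log 0 = 0`). -/
noncomputable def ent {α : Type*} [Fintype α] (p : α → ℝ) : ℝ :=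
  -∑ a, p a * Real.log (p a)

/-- Class constraint `B_ν^{i}(γ)`: class indices `i ∈ {1,2}` are encoded by `Fin 2`,
with `i = 0` for class 1 (`L ≥ log γ`) and `i = 1` for class 2 (`L < log γ`). -/
def InClass (i : Fin 2) (L γ : ℝ) : Prop :=
  if i = 0 then L ≥ Real.log γ else L < Real.log γ

/-- Conditional-entropy term `H_τ(P̂)`: `τ = {1}` is coded `t = 1`, `τ = {2}` is coded
`t = 2`, `τ = {1,2}` is coded `t = 3`. -/
noncomputable def Htau {U1 U2 : Type*} [Fintype U1] [Fintype U2]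
    (t : ℕ) (Phat : U1 × U2 → ℝ) : ℝ :=
  if t = 1 then ent Phat - ent (fun u2 => ∑ u1, Phat (u1, u2))
  else if t = 2 then ent Phat - ent (fun u1 => ∑ u2, Phat (u1, u2))
  else ent Phat

/-- `G^{τ,i₁,i₂}(ρ,γ₁,γ₂)`: infimum (in the extended reals; `+∞` over the empty set)
over pmfs `P̂ ∈ B₁^{i₁}(γ₁) ∩ B₂^{i₂}(γ₂)` of `D(P̂‖P) − ρ H_τ(P̂)`. -/
noncomputable def Gfun {U1 U2 : Type*} [Fintype U1] [Fintype U2]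
    (P : U1 × U2 → ℝ) (t : ℕ) (i1 i2 : Fin 2) (ρ γ1 γ2 : ℝ) : EReal :=
  ⨅ Phat : {p : U1 × U2 → ℝ // IsPmf p ∧
      InClass i1 (∑ u : U1 × U2, p u * Real.log (∑ v, P (u.1, v))) γ1 ∧
      InClass i2 (∑ u : U1 × U2, p u * Real.log (∑ v, P (v, u.2))) γ2},
    ((klDiv Phat.1 P - ρ * Htau t Phat.1 : ℝ) : EReal)

/-- Gallager channel function for error type `τ = {1}`. -/
noncomputable def E0one {X1 X2 Y : Type*} [Fintype X1] [Fintype X2] [Fintype Y]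
    (Q1 : X1 → ℝ) (Q2 : X2 → ℝ) (W : X1 → X2 → Y → ℝ) (ρ : ℝ) : ℝ :=
  -Real.log (∑ p : X2 × Y,
    (∑ x1, Q1 x1 * (Q2 p.1 * W x1 p.1 p.2) ^ (1 / (1 + ρ))) ^ (1 + ρ))

/-- Gallager channel function for error type `τ = {2}`. -/
noncomputable def E0two {X1 X2 Y : Type*} [Fintype X1] [Fintype X2] [Fintype Y]
    (Q1 : X1 → ℝ) (Q2 : X2 → ℝ) (W : X1 → X2 → Y → ℝ) (ρ : ℝ) : ℝ :=
  -Real.log (∑ p : X1 × Y,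
    (∑ x2, Q2 x2 * (Q1 p.1 * W p.1 x2 p.2) ^ (1 / (1 + ρ))) ^ (1 + ρ))

/-- Gallager channel function for error type `τ = {1,2}`. -/
noncomputable def E0both {X1 X2 Y : Type*} [Fintype X1] [Fintype X2] [Fintype Y]
    (Q1 : X1 → ℝ) (Q2 : X2 → ℝ) (W : X1 → X2 → Y → ℝ) (ρ : ℝ) : ℝ :=
  -Real.log (∑ y,
    (∑ p : X1 × X2, Q1 p.1 * Q2 p.2 * (W p.1 p.2 y) ^ (1 / (1 + ρ))) ^ (1 + ρ))

/-- Generalized Gallager source function `E_{s,{1}}(ρ,P)`. -/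
noncomputable def EsOne {U1 U2 : Type*} [Fintype U1] [Fintype U2]
    (P : U1 × U2 → ℝ) (ρ : ℝ) : ℝ :=
  Real.log (∑ u2, (∑ u1, P (u1, u2) ^ (1 / (1 + ρ))) ^ (1 + ρ))

/-- Generalized Gallager source function `E_{s,{2}}(ρ,P)`. -/
noncomputable def EsTwo {U1 U2 : Type*} [Fintype U1] [Fintype U2]
    (P : U1 × U2 → ℝ) (ρ : ℝ) : ℝ :=
  Real.log (∑ u1, (∑ u2, P (u1, u2) ^ (1 / (1 + ρ))) ^ (1 + ρ))

/-- Generalized Gallager source function `E_{s,{1,2}}(ρ,P)`. -/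
noncomputable def EsBoth {U1 U2 : Type*} [Fintype U1] [Fintype U2]
    (P : U1 × U2 → ℝ) (ρ : ℝ) : ℝ :=
  (1 + ρ) * Real.log (∑ u : U1 × U2, P u ^ (1 / (1 + ρ)))

/-- `f_{i₁,i₂}(γ₁,γ₂) = min_τ sup_{ρ ∈ [0,1]} (E₀^τ(ρ;i₁,i₂) + G^{τ,i₁,i₂}(ρ,γ₁,γ₂))`. -/
noncomputable def ffun {U1 U2 X1 X2 Y : Type*}
    [Fintype U1] [Fintype U2] [Fintype X1] [Fintype X2] [Fintype Y]
    (P : U1 × U2 → ℝ) (Q1 : Fin 2 → X1 → ℝ) (Q2 : Fin 2 → X2 → ℝ)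
    (W : X1 → X2 → Y → ℝ) (i1 i2 : Fin 2) (γ1 γ2 : ℝ) : EReal :=
  min
    (⨆ ρ : Set.Icc (0:ℝ) 1,
      ((E0one (Q1 i1) (Q2 i2) W ρ.1 : ℝ) : EReal) + Gfun P 1 i1 i2 ρ.1 γ1 γ2)
    (min
      (⨆ ρ : Set.Icc (0:ℝ) 1,
        ((E0two (Q1 i1) (Q2 i2) W ρ.1 : ℝ) : EReal) + Gfun P 2 i1 i2 ρ.1 γ1 γ2)
      (⨆ ρ : Set.Icc (0:ℝ) 1,
        ((E0both (Q1 i1) (Q2 i2) W ρ.1 : ℝ) : EReal) + Gfun P 3 i1 i2 ρ.1 γ1 γ2))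

private lemma gibbs {α : Type*} [Fintype α] (p c : α → ℝ)
    (hp : ∀ a, 0 ≤ p a) (hps : ∑ a, p a = 1) (hc : ∀ a, 0 < c a) :
    -Real.log (∑ a, c a) ≤ ∑ a, p a * Real.log (p a / c a) := by
  have hα : Nonempty α := by
    by_contra h
    rw [not_nonempty_iff] at h
    simp at hps
  set S := ∑ a, c a with hSdef
  have hS : 0 < S := Finset.sum_pos (fun a _ => hc a) Finset.univ_nonempty
  have key : ∀ a : α, p a * Real.log (c a / p a) ≤ c a / S - p a + p a * Real.log S := by
    intro a
    rcases eq_or_lt_of_le (hp a) with h0 | h0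
    · rw [← h0]
      simp
      exact div_nonneg (hc a).le hS.le
    · have h1 : Real.log (c a / p a) = Real.log (c a / (p a * S)) + Real.log S := by
        rw [← Real.log_mul (div_pos (hc a) (mul_pos h0 hS)).ne' (ne_of_gt hS)]
        congr 1
        field_simp
      rw [h1, mul_add]
      have h2 : Real.log (c a / (p a * S)) ≤ c a / (p a * S) - 1 :=
        Real.log_le_sub_one_of_pos (div_pos (hc a) (mul_pos h0 hS))
      have h3 : p a * Real.log (c a / (p a * S)) ≤ p a * (c a / (p a * S) - 1) :=
        mul_le_mul_of_nonneg_left h2 (le_of_lt h0)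
      have h4 : p a * (c a / (p a * S) - 1) = c a / S - p a := by
        field_simp
      linarith
  have hsum : ∑ a, p a * Real.log (c a / p a) ≤ Real.log S := by
    calc ∑ a, p a * Real.log (c a / p a) ≤ ∑ a, (c a / S - p a + p a * Real.log S) :=
          Finset.sum_le_sum (fun a _ => key a)
      _ = Real.log S := by
          rw [Finset.sum_add_distrib, Finset.sum_sub_distrib, ← Finset.sum_div,
            ← Finset.sum_mul, hps, ← hSdef]
          field_simp
          ring
  have hneg : ∑ a, p a * Real.log (p a / c a) = -∑ a, p a * Real.log (c a / p a) := by
    rw [← Finset.sum_neg_distrib]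
    apply Finset.sum_congr rfl
    intro a _
    rcases eq_or_lt_of_le (hp a) with h0 | h0
    · rw [← h0]; simp
    · rw [show p a / c a = (c a / p a)⁻¹ by rw [inv_div], Real.log_inv]; ring
  rw [hneg]
  linarith

private lemma logsum {α : Type*} [Fintype α] [Nonempty α] (a b : α → ℝ)
    (ha : ∀ i, 0 ≤ a i) (hb : ∀ i, 0 < b i) :
    (∑ i, a i) * Real.log ((∑ i, a i) / (∑ i, b i)) ≤ ∑ i, a i * Real.log (a i / b i) := by
  set A := ∑ i, a i with hAdef
  set B := ∑ i, b i with hBdef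
  have hB : 0 < B := Finset.sum_pos (fun i _ => hb i) Finset.univ_nonempty
  have hA0 : 0 ≤ A := Finset.sum_nonneg fun i _ => ha i
  rcases eq_or_lt_of_le hA0 with h | hA
  · have hz : ∀ i ∈ Finset.univ, a i = (0:ℝ) :=
      (Finset.sum_eq_zero_iff_of_nonneg (fun i _ => ha i)).mp h.symm
    have hz' : ∀ i : α, a i = 0 := fun i => hz i (Finset.mem_univ i)
    simp [hz', ← h]
  · have hsb : ∑ i, b i / B = 1 := by rw [← Finset.sum_div, ← hBdef]; field_simp
    have hgibbs := gibbs (fun i => a i / A) (fun i => b i / B)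
      (fun i => div_nonneg (ha i) hA.le)
      (by rw [← Finset.sum_div, ← hAdef]; field_simp)
      (fun i => div_pos (hb i) hB)
    rw [hsb, Real.log_one, neg_zero] at hgibbs
    have hterm : ∀ i : α, a i * Real.log (a i / b i)
        = A * ((a i / A) * Real.log ((a i / A) / (b i / B))) + a i * Real.log (A / B) := by
      intro i
      rcases eq_or_lt_of_le (ha i) with h0 | h0
      · rw [← h0]; simp
      · have e1 : (a i / A) / (b i / B) = (a i / b i) / (A / B) := by
          field_simp
        have e2 : Real.log (a i / A / (b i / B)) = Real.log (a i / b i) - Real.log (A / B) := by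
          rw [e1, Real.log_div (div_pos h0 (hb i)).ne' (div_pos hA hB).ne']
        rw [e2]
        field_simp
        ring
    have hsum : ∑ i, a i * Real.log (a i / b i)
        = A * (∑ i, (a i / A) * Real.log ((a i / A) / (b i / B))) + A * Real.log (A / B) := by
      calc ∑ i, a i * Real.log (a i / b i)
          = ∑ i, (A * ((a i / A) * Real.log ((a i / A) / (b i / B))) + a i * Real.log (A / B)) :=
            Finset.sum_congr rfl fun i _ => hterm i
        _ = A * (∑ i, (a i / A) * Real.log ((a i / A) / (b i / B))) + A * Real.log (A / B) := by
            rw [Finset.sum_add_distrib, ← Finset.mul_sum, ← Finset.sum_mul, ← hAdef]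
    rw [hsum]
    beta_reduce at hgibbs
    have h5 : 0 ≤ A * (∑ i, (a i / A) * Real.log ((a i / A) / (b i / B))) :=
      mul_nonneg hA0 hgibbs
    linarith

private lemma bound3 {U1 U2 : Type*} [Fintype U1] [Fintype U2] [Nonempty U1] [Nonempty U2]
    (P p : U1 × U2 → ℝ) (hPpos : ∀ u, 0 < P u) (hp : IsPmf p) (ρ : ℝ) (hρ : 0 ≤ ρ) :
    -EsBoth P ρ ≤ klDiv p P - ρ * Htau 3 p := by
  have h1ρ : (0:ℝ) < 1 + ρ := by linarith
  set c : U1 × U2 → ℝ := fun u => P u ^ (1 / (1 + ρ)) with hcdef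
  have hc : ∀ u, 0 < c u := fun u => Real.rpow_pos_of_pos (hPpos u) _
  have hid : ∀ u : U1 × U2, p u * Real.log (p u / P u) + ρ * (p u * Real.log (p u))
      = (1 + ρ) * (p u * Real.log (p u / c u)) := by
    intro u
    rcases eq_or_lt_of_le (hp.1 u) with h0 | h0
    · rw [← h0]; simp
    · have hlc : Real.log (c u) = (1 / (1 + ρ)) * Real.log (P u) := Real.log_rpow (hPpos u) _
      rw [Real.log_div h0.ne' (hPpos u).ne', Real.log_div h0.ne' (hc u).ne', hlc]
      field_simp
      ring
  have hkl : klDiv p P - ρ * Htau 3 p = (1 + ρ) * ∑ u, p u * Real.log (p u / c u) := by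
    rw [Finset.mul_sum]
    have : klDiv p P - ρ * Htau 3 p
        = ∑ u, (p u * Real.log (p u / P u) + ρ * (p u * Real.log (p u))) := by
      simp only [klDiv, Htau, ent, if_neg (by norm_num : (3:ℕ) ≠ 1), if_neg (by norm_num : (3:ℕ) ≠ 2)]
      rw [Finset.sum_add_distrib, ← Finset.mul_sum]
      ring
    rw [this]
    exact Finset.sum_congr rfl fun u _ => hid u
  rw [hkl]
  have hg := gibbs p c hp.1 hp.2 hc
  have hE : EsBoth P ρ = (1 + ρ) * Real.log (∑ u, c u) := rfl
  rw [hE]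
  calc -((1+ρ) * Real.log (∑ u, c u)) = (1+ρ) * (-Real.log (∑ u, c u)) := by ring
    _ ≤ (1+ρ) * ∑ u, p u * Real.log (p u / c u) := by
        exact mul_le_mul_of_nonneg_left hg h1ρ.le

private lemma bound1 {U1 U2 : Type*} [Fintype U1] [Fintype U2] [Nonempty U1] [Nonempty U2]
    (P p : U1 × U2 → ℝ) (hPpos : ∀ u, 0 < P u) (hp : IsPmf p) (ρ : ℝ) (hρ : 0 ≤ ρ) :
    -EsOne P ρ ≤ klDiv p P - ρ * Htau 1 p := by
  have h1ρ : (0:ℝ) < 1 + ρ := by linarith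
  set c : U1 × U2 → ℝ := fun u => P u ^ (1 / (1 + ρ)) with hcdef
  have hc : ∀ u, 0 < c u := fun u => Real.rpow_pos_of_pos (hPpos u) _
  set κ : U2 → ℝ := fun u2 => ∑ u1, c (u1, u2) with hκdef
  have hκ : ∀ u2, 0 < κ u2 := fun u2 => Finset.sum_pos (fun u1 _ => hc _) Finset.univ_nonempty
  set g : U1 × U2 → ℝ := fun u => c u * κ u.2 ^ ρ with hgdef
  have hgpos : ∀ u, 0 < g u := fun u => mul_pos (hc u) (Real.rpow_pos_of_pos (hκ u.2) _)
  set p2 : U2 → ℝ := fun u2 => ∑ u1, p (u1, u2) with hp2def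
  have hp2 : ∀ u2, 0 ≤ p2 u2 := fun u2 => Finset.sum_nonneg fun u1 _ => hp.1 _
  set S := ∑ u : U1 × U2, p u * Real.log (p u / c u) with hSdef
  set T := ∑ u2, p2 u2 * Real.log (p2 u2) with hTdef
  set K := ∑ u2, p2 u2 * Real.log (κ u2) with hKdef
  have hid : ∀ u : U1 × U2, p u * Real.log (p u / P u) + ρ * (p u * Real.log (p u))
      = (1 + ρ) * (p u * Real.log (p u / c u)) := by
    intro u
    rcases eq_or_lt_of_le (hp.1 u) with h0 | h0
    · rw [← h0]; simp
    · have hlc : Real.log (c u) = (1 / (1 + ρ)) * Real.log (P u) := Real.log_rpow (hPpos u) _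
      rw [Real.log_div h0.ne' (hPpos u).ne', Real.log_div h0.ne' (hc u).ne', hlc]
      field_simp
      ring
  have e1 : (∑ u : U1 × U2, p u * Real.log (p u / P u)) + ρ * ∑ u : U1 × U2, p u * Real.log (p u)
      = (1 + ρ) * S := by
    rw [hSdef, Finset.mul_sum, Finset.mul_sum, ← Finset.sum_add_distrib]
    exact Finset.sum_congr rfl fun u _ => hid u
  have hH : Htau 1 p = ent p - ent p2 := by simp [Htau, hp2def]
  have hA : klDiv p P - ρ * Htau 1 p = (1 + ρ) * S - ρ * T := by
    rw [hH]
    simp only [klDiv, ent, hTdef]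
    linear_combination e1
  have hD : ∀ u2 : U2, p2 u2 * Real.log (p2 u2 / κ u2)
      ≤ ∑ u1, p (u1, u2) * Real.log (p (u1, u2) / c (u1, u2)) := fun u2 =>
    logsum (fun u1 => p (u1, u2)) (fun u1 => c (u1, u2)) (fun u1 => hp.1 _) (fun u1 => hc _)
  have hDsum : ∑ u2, p2 u2 * Real.log (p2 u2 / κ u2) ≤ S := by
    calc ∑ u2, p2 u2 * Real.log (p2 u2 / κ u2)
        ≤ ∑ u2, ∑ u1, p (u1, u2) * Real.log (p (u1, u2) / c (u1, u2)) :=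
          Finset.sum_le_sum fun u2 _ => hD u2
      _ = S := by rw [hSdef, Fintype.sum_prod_type, Finset.sum_comm]
  have hE : ∀ u2, p2 u2 * Real.log (p2 u2 / κ u2)
      = p2 u2 * Real.log (p2 u2) - p2 u2 * Real.log (κ u2) := by
    intro u2
    rcases eq_or_lt_of_le (hp2 u2) with h0 | h0
    · rw [← h0]; simp
    · rw [Real.log_div h0.ne' (hκ u2).ne']; ring
  have hTSK : T ≤ S + K := by
    have h2 : ∑ u2, p2 u2 * Real.log (p2 u2 / κ u2) = T - K := by
      rw [hTdef, hKdef, ← Finset.sum_sub_distrib]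
      exact Finset.sum_congr rfl fun u2 _ => hE u2
    linarith [hDsum, h2.symm.le]
  have hBterm : ∀ u : U1 × U2, p u * Real.log (p u / g u)
      = p u * Real.log (p u / c u) - ρ * (p u * Real.log (κ u.2)) := by
    intro u
    rcases eq_or_lt_of_le (hp.1 u) with h0 | h0
    · rw [← h0]; simp
    · have hlg : Real.log (g u) = Real.log (c u) + ρ * Real.log (κ u.2) := by
        simp only [hgdef]
        rw [Real.log_mul (hc u).ne' (Real.rpow_pos_of_pos (hκ u.2) ρ).ne',
          Real.log_rpow (hκ u.2)]
      rw [Real.log_div h0.ne' (hgpos u).ne', Real.log_div h0.ne' (hc u).ne', hlg]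
      ring
  have hmargsum : ∑ u : U1 × U2, p u * Real.log (κ u.2) = K := by
    rw [hKdef, Fintype.sum_prod_type, Finset.sum_comm]
    exact Finset.sum_congr rfl fun u2 _ => by simp only [hp2def, Finset.sum_mul]
  have hB : ∑ u : U1 × U2, p u * Real.log (p u / g u) = S - ρ * K := by
    calc ∑ u : U1 × U2, p u * Real.log (p u / g u)
        = ∑ u : U1 × U2, (p u * Real.log (p u / c u) - ρ * (p u * Real.log (κ u.2))) :=
          Finset.sum_congr rfl fun u _ => hBterm u
      _ = S - ρ * K := by
          rw [Finset.sum_sub_distrib, ← Finset.mul_sum, hmargsum, hSdef]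
  have hgibbs := gibbs p g hp.1 hp.2 hgpos
  have hsumg : ∑ u : U1 × U2, g u = ∑ u2, κ u2 ^ (1 + ρ) := by
    rw [Fintype.sum_prod_type, Finset.sum_comm]
    refine Finset.sum_congr rfl fun u2 _ => ?_
    rw [Real.rpow_add (hκ u2), Real.rpow_one]
    simp only [hgdef]
    rw [← Finset.sum_mul]
  have hEs : EsOne P ρ = Real.log (∑ u2, κ u2 ^ (1 + ρ)) := rfl
  rw [hA, hEs, ← hsumg]
  have h6 : ρ * T ≤ ρ * (S + K) := mul_le_mul_of_nonneg_left hTSK hρ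
  have h7 : -Real.log (∑ u : U1 × U2, g u) ≤ S - ρ * K := hB ▸ hgibbs
  nlinarith [h6, h7]

private lemma bound2 {U1 U2 : Type*} [Fintype U1] [Fintype U2] [Nonempty U1] [Nonempty U2]
    (P p : U1 × U2 → ℝ) (hPpos : ∀ u, 0 < P u) (hp : IsPmf p) (ρ : ℝ) (hρ : 0 ≤ ρ) :
    -EsTwo P ρ ≤ klDiv p P - ρ * Htau 2 p := by
  set P' : U2 × U1 → ℝ := fun v => P (v.2, v.1) with hP'def
  set p' : U2 × U1 → ℝ := fun v => p (v.2, v.1) with hp'def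
  have e := Equiv.prodComm U2 U1
  have hp' : IsPmf p' := by
    constructor
    · exact fun v => hp.1 _
    · rw [← hp.2]
      exact Fintype.sum_equiv (Equiv.prodComm U2 U1) _ _ (fun v => rfl)
  have hkl : klDiv p' P' = klDiv p P :=
    Fintype.sum_equiv (Equiv.prodComm U2 U1) _ _ (fun v => rfl)
  have hent : ent p' = ent p := by
    unfold ent
    congr 1
    exact Fintype.sum_equiv (Equiv.prodComm U2 U1) _ _ (fun v => rfl)
  have hHt : Htau 1 p' = Htau 2 p := by
    simp only [Htau, hent]
    norm_num
    rfl
  have hEs : EsOne P' ρ = EsTwo P ρ := rfl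
  have := bound1 P' p' (fun v => hPpos _) hp' ρ hρ
  rw [hkl, hHt, hEs] at this
  exact this

private lemma Lbounds {b : Type*} [Fintype b] (q : b → ℝ) (hq : IsPmf q)
    (f : b → ℝ) (m M : ℝ) (hm : 0 < m) (hlow : ∀ x, m ≤ f x) (hhigh : ∀ x, f x ≤ M) :
    Real.log m ≤ ∑ x, q x * Real.log (f x) ∧ ∑ x, q x * Real.log (f x) ≤ Real.log M := by
  constructor
  · calc Real.log m = ∑ x, q x * Real.log m := by rw [← Finset.sum_mul, hq.2, one_mul]
      _ ≤ ∑ x, q x * Real.log (f x) := Finset.sum_le_sum fun x _ =>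
          mul_le_mul_of_nonneg_left (Real.log_le_log hm (hlow x)) (hq.1 x)
  · calc ∑ x, q x * Real.log (f x) ≤ ∑ x, q x * Real.log M := Finset.sum_le_sum fun x _ =>
          mul_le_mul_of_nonneg_left
            (Real.log_le_log (lt_of_lt_of_le hm (hlow x)) (hhigh x)) (hq.1 x)
      _ = Real.log M := by rw [← Finset.sum_mul, hq.2, one_mul]

/-- Proposition 3 of the paper: the message-dependent exponent
`E(P,W) = sup_{γ₁,γ₂ ∈ (0,1)} min_{i₁,i₂} f_{i₁,i₂}(γ₁,γ₂)` is at least the best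
i.i.d. random-coding exponent
`max_{i₁,i₂} min_τ sup_{ρ ∈ [0,1]} (E₀^τ(ρ;i₁,i₂) − E_{s,τ}(ρ,P))`. -/
theorem stmt15 {U1 U2 X1 X2 Y : Type*}
    [Fintype U1] [Fintype U2] [Fintype X1] [Fintype X2] [Fintype Y]
    [Nonempty U1] [Nonempty U2] [Nonempty X1] [Nonempty X2] [Nonempty Y]
    (W : X1 → X2 → Y → ℝ)
    (hW : ∀ x1 x2, (∀ y, 0 ≤ W x1 x2 y) ∧ ∑ y, W x1 x2 y = 1)
    (hWpos : ∀ x1 x2 y, 0 < W x1 x2 y)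
    (P : U1 × U2 → ℝ) (hP : IsPmf P) (hPpos : ∀ u, 0 < P u)
    (hmarg1 : ∀ u1, (∑ u2, P (u1, u2)) < 1)
    (hmarg2 : ∀ u2, (∑ u1, P (u1, u2)) < 1)
    (Q1 : Fin 2 → X1 → ℝ) (hQ1 : ∀ i, IsPmf (Q1 i)) (hQ1pos : ∀ i x1, 0 < Q1 i x1)
    (Q2 : Fin 2 → X2 → ℝ) (hQ2 : ∀ i, IsPmf (Q2 i)) (hQ2pos : ∀ i x2, 0 < Q2 i x2) :
    (⨆ γ1 : Set.Ioo (0:ℝ) 1, ⨆ γ2 : Set.Ioo (0:ℝ) 1,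
        ⨅ i1 : Fin 2, ⨅ i2 : Fin 2, ffun P Q1 Q2 W i1 i2 γ1.1 γ2.1)
    ≥ ⨆ i1 : Fin 2, ⨆ i2 : Fin 2,
        min
          (⨆ ρ : Set.Icc (0:ℝ) 1,
            ((E0one (Q1 i1) (Q2 i2) W ρ.1 - EsOne P ρ.1 : ℝ) : EReal))
          (min
            (⨆ ρ : Set.Icc (0:ℝ) 1,
              ((E0two (Q1 i1) (Q2 i2) W ρ.1 - EsTwo P ρ.1 : ℝ) : EReal))
            (⨆ ρ : Set.Icc (0:ℝ) 1,
              ((E0both (Q1 i1) (Q2 i2) W ρ.1 - EsBoth P ρ.1 : ℝ) : EReal))) := by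
  classical
  refine iSup_le fun i1 => iSup_le fun i2 => ?_
  have hU1 : (Finset.univ : Finset U1).Nonempty := Finset.univ_nonempty
  have hU2 : (Finset.univ : Finset U2).Nonempty := Finset.univ_nonempty
  set m1 := Finset.univ.inf' hU1 (fun u1 => ∑ u2, P (u1, u2)) with hm1def
  set M1 := Finset.univ.sup' hU1 (fun u1 => ∑ u2, P (u1, u2)) with hM1def
  set m2 := Finset.univ.inf' hU2 (fun u2 => ∑ u1, P (u1, u2)) with hm2def
  set M2 := Finset.univ.sup' hU2 (fun u2 => ∑ u1, P (u1, u2)) with hM2def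
  have hm1pos : 0 < m1 := (Finset.lt_inf'_iff hU1).mpr fun u1 _ =>
    Finset.sum_pos (fun u2 _ => hPpos _) hU2
  have hM1lt : M1 < 1 := (Finset.sup'_lt_iff hU1).mpr fun u1 _ => hmarg1 u1
  have hm1M1 : m1 ≤ M1 := le_trans
    (Finset.inf'_le (fun u1 => ∑ u2, P (u1, u2)) (Finset.mem_univ (Classical.arbitrary U1)))
    (Finset.le_sup' (fun u1 => ∑ u2, P (u1, u2)) (Finset.mem_univ _))
  have hm2pos : 0 < m2 := (Finset.lt_inf'_iff hU2).mpr fun u2 _ =>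
    Finset.sum_pos (fun u1 _ => hPpos _) hU1
  have hM2lt : M2 < 1 := (Finset.sup'_lt_iff hU2).mpr fun u2 _ => hmarg2 u2
  have hm2M2 : m2 ≤ M2 := le_trans
    (Finset.inf'_le (fun u2 => ∑ u1, P (u1, u2)) (Finset.mem_univ (Classical.arbitrary U2)))
    (Finset.le_sup' (fun u2 => ∑ u1, P (u1, u2)) (Finset.mem_univ _))
  set γ1 : ℝ := if i1 = 0 then m1 / 2 else (M1 + 1) / 2 with hγ1def
  set γ2 : ℝ := if i2 = 0 then m2 / 2 else (M2 + 1) / 2 with hγ2def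
  have hγ1 : γ1 ∈ Set.Ioo (0:ℝ) 1 := by
    rw [hγ1def]; split_ifs <;> constructor <;> linarith
  have hγ2 : γ2 ∈ Set.Ioo (0:ℝ) 1 := by
    rw [hγ2def]; split_ifs <;> constructor <;> linarith
  -- class membership facts
  have hIn1 : ∀ q : U1 × U2 → ℝ, IsPmf q →
      InClass i1 (∑ u : U1 × U2, q u * Real.log (∑ v, P (u.1, v))) γ1 ∧
      ∀ j : Fin 2, j ≠ i1 →
        ¬ InClass j (∑ u : U1 × U2, q u * Real.log (∑ v, P (u.1, v))) γ1 := by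
    intro q hq
    obtain ⟨hlo, hhi⟩ := Lbounds q hq (fun u => ∑ v, P (u.1, v)) m1 M1 hm1pos
      (fun u => Finset.inf'_le (fun u1 => ∑ u2, P (u1, u2)) (Finset.mem_univ u.1))
      (fun u => Finset.le_sup' (fun u1 => ∑ u2, P (u1, u2)) (Finset.mem_univ u.1))
    by_cases h1 : i1 = 0
    · have hγ : γ1 = m1 / 2 := by rw [hγ1def, if_pos h1]
      have hlt : Real.log γ1 < ∑ u : U1 × U2, q u * Real.log (∑ v, P (u.1, v)) :=
        lt_of_lt_of_le (by rw [hγ]; exact Real.log_lt_log (by linarith) (by linarith)) hlo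
      refine ⟨?_, ?_⟩
      · rw [h1]; simp only [InClass, if_pos rfl]; exact hlt.le
      · intro j hj
        have hj1 : j = 1 := by fin_cases j <;> simp_all
        rw [hj1]
        simp only [InClass, if_neg (by norm_num : (1 : Fin 2) ≠ 0)]
        exact not_lt.mpr hlt.le
    · have h1' : i1 = 1 := by fin_cases i1 <;> simp_all
      have hγ : γ1 = (M1 + 1) / 2 := by rw [hγ1def, if_neg h1]
      have hlt : (∑ u : U1 × U2, q u * Real.log (∑ v, P (u.1, v))) < Real.log γ1 :=
        lt_of_le_of_lt hhi (by
          rw [hγ]; exact Real.log_lt_log (by linarith) (by linarith))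
      refine ⟨?_, ?_⟩
      · rw [h1']; simp only [InClass, if_neg (by norm_num : (1 : Fin 2) ≠ 0)]; exact hlt
      · intro j hj
        have hj0 : j = 0 := by fin_cases j <;> simp_all
        rw [hj0]
        simp only [InClass, if_pos rfl]
        exact not_le.mpr hlt
  have hIn2 : ∀ q : U1 × U2 → ℝ, IsPmf q →
      InClass i2 (∑ u : U1 × U2, q u * Real.log (∑ v, P (v, u.2))) γ2 ∧
      ∀ j : Fin 2, j ≠ i2 →
        ¬ InClass j (∑ u : U1 × U2, q u * Real.log (∑ v, P (v, u.2))) γ2 := by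
    intro q hq
    obtain ⟨hlo, hhi⟩ := Lbounds q hq (fun u => ∑ v, P (v, u.2)) m2 M2 hm2pos
      (fun u => Finset.inf'_le (fun u2 => ∑ u1, P (u1, u2)) (Finset.mem_univ u.2))
      (fun u => Finset.le_sup' (fun u2 => ∑ u1, P (u1, u2)) (Finset.mem_univ u.2))
    by_cases h1 : i2 = 0
    · have hγ : γ2 = m2 / 2 := by rw [hγ2def, if_pos h1]
      have hlt : Real.log γ2 < ∑ u : U1 × U2, q u * Real.log (∑ v, P (v, u.2)) :=
        lt_of_lt_of_le (by rw [hγ]; exact Real.log_lt_log (by linarith) (by linarith)) hlo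
      refine ⟨?_, ?_⟩
      · rw [h1]; simp only [InClass, if_pos rfl]; exact hlt.le
      · intro j hj
        have hj1 : j = 1 := by fin_cases j <;> simp_all
        rw [hj1]
        simp only [InClass, if_neg (by norm_num : (1 : Fin 2) ≠ 0)]
        exact not_lt.mpr hlt.le
    · have h1' : i2 = 1 := by fin_cases i2 <;> simp_all
      have hγ : γ2 = (M2 + 1) / 2 := by rw [hγ2def, if_neg h1]
      have hlt : (∑ u : U1 × U2, q u * Real.log (∑ v, P (v, u.2))) < Real.log γ2 :=
        lt_of_le_of_lt hhi (by
          rw [hγ]; exact Real.log_lt_log (by linarith) (by linarith))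
      refine ⟨?_, ?_⟩
      · rw [h1']; simp only [InClass, if_neg (by norm_num : (1 : Fin 2) ≠ 0)]; exact hlt
      · intro j hj
        have hj0 : j = 0 := by fin_cases j <;> simp_all
        rw [hj0]
        simp only [InClass, if_pos rfl]
        exact not_le.mpr hlt
  refine le_trans ?_ (le_iSup _ (⟨γ1, hγ1⟩ : Set.Ioo (0:ℝ) 1))
  refine le_trans ?_ (le_iSup _ (⟨γ2, hγ2⟩ : Set.Ioo (0:ℝ) 1))
  refine le_iInf fun i1' => le_iInf fun i2' => ?_
  by_cases hii : i1' = i1 ∧ i2' = i2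
  · obtain ⟨rfl, rfl⟩ := hii
    simp only [ffun]
    refine min_le_min ?_ (min_le_min ?_ ?_)
    · refine iSup_mono fun ρ => ?_
      have hG : ((-(EsOne P ρ.1) : ℝ) : EReal) ≤ Gfun P 1 i1' i2' ρ.1 γ1 γ2 := by
        refine le_iInf fun q => ?_
        exact EReal.coe_le_coe_iff.mpr (bound1 P q.1 hPpos q.2.1 ρ.1 ρ.2.1)
      calc ((E0one (Q1 i1') (Q2 i2') W ρ.1 - EsOne P ρ.1 : ℝ) : EReal)
          = ((E0one (Q1 i1') (Q2 i2') W ρ.1 : ℝ) : EReal) + ((-(EsOne P ρ.1) : ℝ) : EReal) := by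
            rw [sub_eq_add_neg, EReal.coe_add]
        _ ≤ _ := add_le_add (le_refl _) hG
    · refine iSup_mono fun ρ => ?_
      have hG : ((-(EsTwo P ρ.1) : ℝ) : EReal) ≤ Gfun P 2 i1' i2' ρ.1 γ1 γ2 := by
        refine le_iInf fun q => ?_
        exact EReal.coe_le_coe_iff.mpr (bound2 P q.1 hPpos q.2.1 ρ.1 ρ.2.1)
      calc ((E0two (Q1 i1') (Q2 i2') W ρ.1 - EsTwo P ρ.1 : ℝ) : EReal)
          = ((E0two (Q1 i1') (Q2 i2') W ρ.1 : ℝ) : EReal) + ((-(EsTwo P ρ.1) : ℝ) : EReal) := by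
            rw [sub_eq_add_neg, EReal.coe_add]
        _ ≤ _ := add_le_add (le_refl _) hG
    · refine iSup_mono fun ρ => ?_
      have hG : ((-(EsBoth P ρ.1) : ℝ) : EReal) ≤ Gfun P 3 i1' i2' ρ.1 γ1 γ2 := by
        refine le_iInf fun q => ?_
        exact EReal.coe_le_coe_iff.mpr (bound3 P q.1 hPpos q.2.1 ρ.1 ρ.2.1)
      calc ((E0both (Q1 i1') (Q2 i2') W ρ.1 - EsBoth P ρ.1 : ℝ) : EReal)
          = ((E0both (Q1 i1') (Q2 i2') W ρ.1 : ℝ) : EReal) + ((-(EsBoth P ρ.1) : ℝ) : EReal) := by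
            rw [sub_eq_add_neg, EReal.coe_add]
        _ ≤ _ := add_le_add (le_refl _) hG
  · have hiOr : i1' ≠ i1 ∨ i2' ≠ i2 := by tauto
    haveI hempty : IsEmpty {p : U1 × U2 → ℝ // IsPmf p ∧
        InClass i1' (∑ u : U1 × U2, p u * Real.log (∑ v, P (u.1, v))) γ1 ∧
        InClass i2' (∑ u : U1 × U2, p u * Real.log (∑ v, P (v, u.2))) γ2} := by
      refine ⟨fun q => ?_⟩
      obtain ⟨q, hq, hc1, hc2⟩ := q
      rcases hiOr with h | h
      · exact (hIn1 q hq).2 i1' h hc1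
      · exact (hIn2 q hq).2 i2' h hc2
    have hG : ∀ (t : ℕ) (ρ : ℝ), Gfun P t i1' i2' ρ γ1 γ2 = (⊤ : EReal) := by
      intro t ρ
      simp only [Gfun]
      exact iInf_of_empty _
    have hfftop : ffun P Q1 Q2 W i1' i2' γ1 γ2 = ⊤ := by
      haveI : Nonempty (Set.Icc (0:ℝ) 1) := ⟨⟨0, by norm_num⟩⟩
      simp only [ffun, hG, EReal.coe_add_top, iSup_const, min_self]
    rw [hfftop]
    exact le_top
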